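/- Let N, M: A → B be quantum channels, let G be a finite group with unitary representations g ↦ U(g) on ℂ^{|A|} and g ↦ V(g) on ℂ^{|B|}, and let p_G be a probability distribution on G. Let ρ_A be a density matrix with purification φ^ρ_{RA}, let ρ̄_A = ∑_{g} p_G(g) U(g) ρ_A U(g)†, and let φ^{ρ̄}_{RA} be any purification of ρ̄_A. For g ∈ G write N^g(σ) = V(g)† N(U(g) σ U(g)†) V(g), and similarly M^g. If D is a generalized divergence satisfying the direct-sum property on classical–quantum states, then D((id_R ⊗ N)(φ^{ρ̄}_{RA}) ‖ (id_R ⊗ M)(φ^{ρ̄}_{RA})) ≥ ∑_{g} p_G(g) · D((id_R ⊗ N^g)(φ^ρ_{RA}) ‖ (id_R ⊗ M^g)(φ^ρ_{RA})). -/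

import Mathlib

open scoped BigOperators Kronecker ComplexOrder
open Matrix MeasureTheory Filter

noncomputable section

abbrev Mat (n : ℕ) := Matrix (Fin n) (Fin n) ℂ

/-- A density matrix: positive semidefinite with unit trace. -/
def IsDensity {ι : Type} [Fintype ι] (ρ : Matrix ι ι ℂ) : Prop :=
  ρ.PosSemidef ∧ ρ.trace = 1

/-- The trace norm ‖M‖₁ = tr √(MᴴM). -/
def traceNorm {ι : Type} [Fintype ι] [DecidableEq ι] (M : Matrix ι ι ℂ) : ℝ :=
  ((Matrix.posSemidef_conjTranspose_mul_self M).1.eigenvectorUnitary.1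
    * Matrix.diagonal (((↑) : ℝ → ℂ) ∘ Real.sqrt ∘ (Matrix.posSemidef_conjTranspose_mul_self M).1.eigenvalues)
    * (star (Matrix.posSemidef_conjTranspose_mul_self M).1.eigenvectorUnitary : Matrix ι ι ℂ)).trace.re

/-- The rank-one operator |v⟩⟨v| associated to a vector. -/
def vecState {ι : Type} (v : ι → ℂ) : Matrix ι ι ℂ :=
  Matrix.of fun i j => v i * star (v j)

/-- Partial trace over the first tensor factor. -/
def ptraceLeft {R A : Type} [Fintype R] (M : Matrix (R × A) (R × A) ℂ) : Matrix A A ℂ :=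
  Matrix.of fun a a' => ∑ r, M (r, a) (r, a')

/-- Partial trace over the second tensor factor. -/
def ptraceRight {A E : Type} [Fintype E] (M : Matrix (A × E) (A × E) ℂ) : Matrix A A ℂ :=
  Matrix.of fun a a' => ∑ e, M (a, e) (a', e)

/-- The extension id_R ⊗ Φ of a linear map on matrices. -/
def idTensor {R A B : Type} (Φ : Matrix A A ℂ →ₗ[ℂ] Matrix B B ℂ) :
    Matrix (R × A) (R × A) ℂ →ₗ[ℂ] Matrix (R × B) (R × B) ℂ where
  toFun M := Matrix.of fun p q => Φ (Matrix.of fun a a' => M (p.1, a) (q.1, a')) p.2 q.2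
  map_add' M N := by
    ext p q
    have h : (Matrix.of fun a a' => M (p.1, a) (q.1, a') + N (p.1, a) (q.1, a'))
        = (Matrix.of fun a a' => M (p.1, a) (q.1, a'))
          + (Matrix.of fun a a' => N (p.1, a) (q.1, a')) := by
      ext a a'; simp [Matrix.add_apply]
    simp only [Matrix.of_apply, Matrix.add_apply]
    rw [h, map_add]
    simp [Matrix.add_apply]
  map_smul' c M := by
    ext p q
    have h : (Matrix.of fun a a' => c • M (p.1, a) (q.1, a'))
        = c • (Matrix.of fun a a' => M (p.1, a) (q.1, a')) := by
      ext a a'; simp [Matrix.smul_apply]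
    simp only [Matrix.of_apply, Matrix.smul_apply]
    rw [h, Φ.map_smul]
    simp [Matrix.smul_apply]

/-- A linear map is completely positive and trace preserving (a quantum channel). -/
def IsCPTP {A B : Type} [Fintype A] [Fintype B] (Φ : Matrix A A ℂ →ₗ[ℂ] Matrix B B ℂ) : Prop :=
  (∀ (r : ℕ) (M : Matrix (Fin r × A) (Fin r × A) ℂ), M.PosSemidef → (idTensor Φ M).PosSemidef)
    ∧ ∀ M : Matrix A A ℂ, (Φ M).trace = M.trace

/-- The tensor product Φ ⊗ Ψ of two linear maps on matrices. -/
def tensorMap {A B C D : Type} [Fintype A] [DecidableEq A] [Fintype C]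
    (Φ : Matrix A A ℂ →ₗ[ℂ] Matrix B B ℂ) (Ψ : Matrix C C ℂ →ₗ[ℂ] Matrix D D ℂ) :
    Matrix (A × C) (A × C) ℂ →ₗ[ℂ] Matrix (B × D) (B × D) ℂ where
  toFun M := Matrix.of fun p q => ∑ a : A, ∑ a' : A,
      Φ (Matrix.single a a' 1) p.1 q.1
        * Ψ (Matrix.of fun c c' => M (a, c) (a', c')) p.2 q.2
  map_add' M N := by
    ext p q
    have h : ∀ a a' : A, (Matrix.of fun c c' => M (a, c) (a', c') + N (a, c) (a', c'))
        = (Matrix.of fun c c' => M (a, c) (a', c'))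
          + (Matrix.of fun c c' => N (a, c) (a', c')) := by
      intro a a'; ext c c'; simp [Matrix.add_apply]
    simp only [Matrix.of_apply, Matrix.add_apply]
    rw [← Finset.sum_add_distrib]
    refine Finset.sum_congr rfl fun a _ => ?_
    rw [← Finset.sum_add_distrib]
    refine Finset.sum_congr rfl fun a' _ => ?_
    rw [h a a', map_add]
    simp [Matrix.add_apply, mul_add]
  map_smul' k M := by
    ext p q
    have h : ∀ a a' : A, (Matrix.of fun c c' => k * M (a, c) (a', c'))
        = k • (Matrix.of fun c c' => M (a, c) (a', c')) := by
      intro a a'; ext c c'; simp [Matrix.smul_apply, smul_eq_mul]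
    simp only [Matrix.of_apply, Matrix.smul_apply, smul_eq_mul, RingHom.id_apply]
    rw [Finset.mul_sum]
    refine Finset.sum_congr rfl fun a _ => ?_
    rw [Finset.mul_sum]
    refine Finset.sum_congr rfl fun a' _ => ?_
    rw [h a a', Ψ.map_smul]
    simp only [Matrix.smul_apply, smul_eq_mul]
    ring
  
/-- The n-fold tensor power Φ^{⊗n} of a linear map on matrices. -/
def powMap {A B : Type} [Fintype A] [DecidableEq A] [Fintype B] [DecidableEq B]
    (Φ : Matrix A A ℂ →ₗ[ℂ] Matrix B B ℂ) :
    (n : ℕ) → (Matrix (Fin n → A) (Fin n → A) ℂ →ₗ[ℂ] Matrix (Fin n → B) (Fin n → B) ℂ)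
  | 0 => (Matrix.reindexLinearEquiv ℂ ℂ (Equiv.ofUnique (Fin 0 → A) (Fin 0 → B))
      (Equiv.ofUnique (Fin 0 → A) (Fin 0 → B))).toLinearMap
  | (n + 1) =>
      (Matrix.reindexLinearEquiv ℂ ℂ (Fin.insertNthEquiv (fun _ => B) 0).symm.symm
          (Fin.insertNthEquiv (fun _ => B) 0).symm.symm).toLinearMap
        ∘ₗ tensorMap Φ (powMap Φ n)
        ∘ₗ (Matrix.reindexLinearEquiv ℂ ℂ (Fin.insertNthEquiv (fun _ => A) 0).symm
          (Fin.insertNthEquiv (fun _ => A) 0).symm).toLinearMap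

open scoped Classical in
/-- The von Neumann entropy (base 2), via the eigenvalues of a Hermitian matrix. -/
def vnEntropy {ι : Type} [Fintype ι] [DecidableEq ι] (ρ : Matrix ι ι ℂ) : ℝ :=
  if h : ρ.IsHermitian then ∑ i, -(h.eigenvalues i * Real.logb 2 (h.eigenvalues i)) else 0

/-- The function g(ε) = (1+ε)log₂(1+ε) − ε log₂ ε (with the convention 0·log 0 = 0). -/
def gfun (x : ℝ) : ℝ := (1 + x) * Real.logb 2 (1 + x) - x * Real.logb 2 x

/-- A finite ensemble of density matrices. -/
structure Ensemble (A : Type) [Fintype A] where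
  m : ℕ
  p : Fin m → ℝ
  p_nonneg : ∀ i, 0 ≤ p i
  p_sum : ∑ i, p i = 1
  ρ : Fin m → Matrix A A ℂ
  ρ_density : ∀ i, IsDensity (ρ i)

/-- A finite ensemble of pure states, given by unit vectors. -/
structure PureEnsemble (A : Type) [Fintype A] where
  m : ℕ
  p : Fin m → ℝ
  p_nonneg : ∀ i, 0 ≤ p i
  p_sum : ∑ i, p i = 1
  v : Fin m → (A → ℂ)
  pure : ∀ i, IsDensity (vecState (v i))

/-- The Holevo information of a (channel given as a) linear map. -/
def holevoMap {A B : Type} [Fintype A] [Fintype B] [DecidableEq B]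
    (Φ : Matrix A A ℂ →ₗ[ℂ] Matrix B B ℂ) : ℝ :=
  ⨆ e : Ensemble A,
    (vnEntropy (Φ (∑ i, (e.p i : ℂ) • e.ρ i)) - ∑ i, e.p i * vnEntropy (Φ (e.ρ i)))

/-- The classical capacity: the regularized Holevo information. -/
def classicalCapacity {A B : Type} [Fintype A] [DecidableEq A] [Fintype B] [DecidableEq B]
    (Φ : Matrix A A ℂ →ₗ[ℂ] Matrix B B ℂ) : ℝ :=
  Filter.limsup (fun n : ℕ => holevoMap (powMap Φ n) / (n : ℝ)) Filter.atTop

/-- Half the diamond norm of the difference of two maps: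
the supremum over reference sizes and density inputs of half the output trace distance. -/
def diamondDist {A B : Type} [Fintype A] [Fintype B] [DecidableEq B]
    (Φ Ψ : Matrix A A ℂ →ₗ[ℂ] Matrix B B ℂ) : ℝ :=
  ⨆ r : ℕ, ⨆ ρ : {ρ : Matrix (Fin r × A) (Fin r × A) ℂ // IsDensity ρ},
    (1 / 2) * traceNorm (idTensor Φ ρ.1 - idTensor Ψ ρ.1)

/-- The diamond norm of the difference of two maps (without the factor 1/2). -/
def diamondDistFull {A B : Type} [Fintype A] [Fintype B] [DecidableEq B]
    (Φ Ψ : Matrix A A ℂ →ₗ[ℂ] Matrix B B ℂ) : ℝ :=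
  ⨆ r : ℕ, ⨆ ρ : {ρ : Matrix (Fin r × A) (Fin r × A) ℂ // IsDensity ρ},
    traceNorm (idTensor Φ ρ.1 - idTensor Ψ ρ.1)

/-- Conjugation ρ ↦ W ρ Wᴴ as a linear map. -/
def conjMap {ι κ : Type} [Fintype ι] [Fintype κ] (W : Matrix κ ι ℂ) :
    Matrix ι ι ℂ →ₗ[ℂ] Matrix κ κ ℂ where
  toFun ρ := W * ρ * Wᴴ
  map_add' ρ σ := by simp [Matrix.mul_add, Matrix.add_mul]
  map_smul' c ρ := by simp [Matrix.mul_smul, Matrix.smul_mul]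

/-- A classical–quantum state ∑ₓ p(x) |x⟩⟨x| ⊗ ρ(x). -/
def cqState {X ι : Type} [DecidableEq X] (p : X → ℝ) (ρ : X → Matrix ι ι ℂ) :
    Matrix (X × ι) (X × ι) ℂ :=
  Matrix.of fun a b => if a.1 = b.1 then (p a.1 : ℂ) * ρ a.1 a.2 b.2 else 0

/-- A generalized divergence: a family of real functionals on pairs of matrices, one for each
finite-dimensional system, satisfying the data-processing inequality under quantum channels. -/
structure GenDivergence where
  D : ∀ {ι : Type} [Fintype ι] [DecidableEq ι], Matrix ι ι ℂ → Matrix ι ι ℂ → ℝ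
  data_proc : ∀ {ι κ : Type} [Fintype ι] [DecidableEq ι] [Fintype κ] [DecidableEq κ]
      (Λ : Matrix ι ι ℂ →ₗ[ℂ] Matrix κ κ ℂ), IsCPTP Λ →
      ∀ ρ σ : Matrix ι ι ℂ, IsDensity ρ → σ.PosSemidef → D (Λ ρ) (Λ σ) ≤ D ρ σ

/-- The direct-sum property of a generalized divergence on classical–quantum states. -/
def HasDirectSum (𝒟 : GenDivergence) : Prop :=
  ∀ {X ι : Type} [Fintype X] [DecidableEq X] [Fintype ι] [DecidableEq ι]
    (p : X → ℝ), (∀ x, 0 ≤ p x) → (∑ x, p x) = 1 →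
    ∀ (ρ σ : X → Matrix ι ι ℂ), (∀ x, IsDensity (ρ x)) → (∀ x, IsDensity (σ x)) →
    𝒟.D (cqState p ρ) (cqState p σ) = ∑ x, p x * 𝒟.D (ρ x) (σ x)

/-- The generalized channel divergence: optimization over pure inputs with reference R ≅ A. -/
def chanDiv (𝒟 : GenDivergence) {A B : Type} [Fintype A] [DecidableEq A]
    [Fintype B] [DecidableEq B] (Φ Ψ : Matrix A A ℂ →ₗ[ℂ] Matrix B B ℂ) : ℝ :=
  ⨆ v : {v : A × A → ℂ // IsDensity (vecState v)},
    𝒟.D (idTensor Φ (vecState v.1)) (idTensor Ψ (vecState v.1))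

/-- The maximally entangled state on A ⊗ A. -/
def maxEnt (A : Type) [Fintype A] [DecidableEq A] : Matrix (A × A) (A × A) ℂ :=
  vecState (fun p => if p.1 = p.2 then (((Real.sqrt (Fintype.card A))⁻¹ : ℝ) : ℂ) else 0)

/-- The Choi operator of a linear map on matrices. -/
def choi {A B : Type} [Fintype A] [DecidableEq A]
    (Φ : Matrix A A ℂ →ₗ[ℂ] Matrix B B ℂ) : Matrix (A × B) (A × B) ℂ :=
  idTensor Φ (Matrix.of fun p q => if p.1 = p.2 ∧ q.1 = q.2 then 1 else 0)

/-- Separability of a bipartite operator: a finite sum of tensor products of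
positive semidefinite operators. -/
def IsSepState {A B : Type} [Fintype A] [Fintype B]
    (M : Matrix (A × B) (A × B) ℂ) : Prop :=
  ∃ (k : ℕ) (P : Fin k → Matrix A A ℂ) (Q : Fin k → Matrix B B ℂ),
    (∀ i, (P i).PosSemidef) ∧ (∀ i, (Q i).PosSemidef) ∧ M = ∑ i, P i ⊗ₖ Q i

/-- An entanglement-breaking channel: a channel whose Choi operator is separable. -/
def IsEBChannel {A B : Type} [Fintype A] [DecidableEq A] [Fintype B]
    (Φ : Matrix A A ℂ →ₗ[ℂ] Matrix B B ℂ) : Prop :=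
  IsCPTP Φ ∧ IsSepState (choi Φ)

/-- φ is a purification (with reference system R on the left) of the state ρ. -/
def IsPurification {R A : Type} [Fintype R] [Fintype A]
    (φ : Matrix (R × A) (R × A) ℂ) (ρ : Matrix A A ℂ) : Prop :=
  (∃ v : R × A → ℂ, φ = vecState v) ∧ IsDensity φ ∧ ptraceLeft φ = ρ

/-- The channel ρ ↦ tr_E (V ρ Vᴴ) induced by an isometry V : A → B ⊗ E. -/
def dilMap {A B E : Type} [Fintype A] [Fintype B] [Fintype E]
    (V : Matrix (B × E) A ℂ) : Matrix A A ℂ →ₗ[ℂ] Matrix B B ℂ where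
  toFun ρ := ptraceRight (V * ρ * Vᴴ)
  map_add' ρ σ := by
    ext a a'
    simp [ptraceRight, Matrix.mul_add, Matrix.add_mul, Matrix.add_apply,
      Finset.sum_add_distrib]
  map_smul' c ρ := by
    ext a a'
    simp [ptraceRight, Matrix.mul_smul, Matrix.smul_mul, Matrix.smul_apply,
      Finset.mul_sum, smul_eq_mul]

/-- The complementary channel ρ ↦ tr_B (V ρ Vᴴ) induced by an isometry V : A → B ⊗ E. -/
def complMap {A B E : Type} [Fintype A] [Fintype B] [Fintype E]
    (V : Matrix (B × E) A ℂ) : Matrix A A ℂ →ₗ[ℂ] Matrix E E ℂ where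
  toFun ρ := ptraceLeft (V * ρ * Vᴴ)
  map_add' ρ σ := by
    ext a a'
    simp [ptraceLeft, Matrix.mul_add, Matrix.add_mul, Matrix.add_apply,
      Finset.sum_add_distrib]
  map_smul' c ρ := by
    ext a a'
    simp [ptraceLeft, Matrix.mul_smul, Matrix.smul_mul, Matrix.smul_apply,
      Finset.mul_sum, smul_eq_mul]

/-- A Hadamard channel: some Stinespring dilation has entanglement-breaking complement. -/
def IsHadamardChan {A B : Type} [Fintype A] [DecidableEq A] [Fintype B] [DecidableEq B]
    (Φ : Matrix A A ℂ →ₗ[ℂ] Matrix B B ℂ) : Prop :=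
  ∃ (e : ℕ) (V : Matrix (B × Fin e) A ℂ), Vᴴ * V = 1 ∧
    (∀ ρ, Φ ρ = ptraceRight (V * ρ * Vᴴ)) ∧ IsSepState (choi (complMap V))

/-- Covariance of a channel with respect to unitary representations of a group. -/
def CovariantChan {G A B : Type} [Group G] [Fintype A] [DecidableEq A]
    [Fintype B] [DecidableEq B]
    (U : G →* Matrix.unitaryGroup A ℂ) (V : G →* Matrix.unitaryGroup B ℂ)
    (Φ : Matrix A A ℂ →ₗ[ℂ] Matrix B B ℂ) : Prop :=
  ∀ (g : G) (ρ : Matrix A A ℂ),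
    (V g : Matrix B B ℂ) * Φ ρ * (V g : Matrix B B ℂ)ᴴ
      = Φ ((U g : Matrix A A ℂ) * ρ * (U g : Matrix A A ℂ)ᴴ)

/-- A unitary 1-design: averaging over the group sends every matrix to tr(ρ)·I/d. -/
def IsOneDesign {G A : Type} [Group G] [Fintype G] [Fintype A] [DecidableEq A]
    (U : G →* Matrix.unitaryGroup A ℂ) : Prop :=
  ∀ ρ : Matrix A A ℂ,
    (Fintype.card G : ℂ)⁻¹ • ∑ g, (U g : Matrix A A ℂ) * ρ * (U g : Matrix A A ℂ)ᴴ
      = (ρ.trace * (Fintype.card A : ℂ)⁻¹) • (1 : Matrix A A ℂ)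

/-- Pauli X. -/
def σX : Mat 2 := !![0, 1; 1, 0]
/-- Pauli Y. -/
def σY : Mat 2 := !![0, -Complex.I; Complex.I, 0]
/-- Pauli Z. -/
def σZ : Mat 2 := !![1, 0; 0, -1]

/-- The Pauli twirl of a qubit channel. -/
def pauliTwirl (Φ : Mat 2 →ₗ[ℂ] Mat 2) : Mat 2 →ₗ[ℂ] Mat 2 :=
  ((4 : ℂ)⁻¹) • (Φ + conjMap σX ∘ₗ Φ ∘ₗ conjMap σX + conjMap σY ∘ₗ Φ ∘ₗ conjMap σY
    + conjMap σZ ∘ₗ Φ ∘ₗ conjMap σZ)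

/-- The amplitude damping channel with damping parameter p. -/
def ampDamp (p : ℝ) : Mat 2 →ₗ[ℂ] Mat 2 :=
  conjMap (!![1, 0; 0, ((Real.sqrt (1 - p) : ℝ) : ℂ)] : Mat 2)
    + conjMap (!![0, ((Real.sqrt p : ℝ) : ℂ); 0, 0] : Mat 2)

/-- The qubit depolarizing channel with parameter p. -/
def depol (p : ℝ) : Mat 2 →ₗ[ℂ] Mat 2 :=
  (((1 - p : ℝ) : ℂ)) • LinearMap.id
    + (((p / 3 : ℝ) : ℂ)) • (conjMap σX + conjMap σY + conjMap σZ)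

/-- The Z-dephasing channel with parameter p. -/
def deph (p : ℝ) : Mat 2 →ₗ[ℂ] Mat 2 :=
  (((1 - p : ℝ) : ℂ)) • LinearMap.id + ((p : ℝ) : ℂ) • conjMap σZ

/-- The entanglement-breaking parameter: distance to the nearest EB channel. -/
def ebParam {A B : Type} [Fintype A] [DecidableEq A] [Fintype B] [DecidableEq B]
    (Φ : Matrix A A ℂ →ₗ[ℂ] Matrix B B ℂ) : ℝ :=
  ⨅ M : {M : Matrix A A ℂ →ₗ[ℂ] Matrix B B ℂ // IsEBChannel M}, diamondDist Φ M.1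

end

/-! The twirled vector `ψ = ∑_g √p(g) |g⟩ ⊗ (1 ⊗ U(g)) φ` purifies `ρ̄` just as `φ̄` does. By
Uhlmann's theorem, in the form "two purifications of the same state differ by a contraction on
the reference system", `φ̄` is carried to `ψ` by a channel acting on the reference alone, hence
`(id ⊗ N)(φ̄)` to `(id ⊗ N)(ψ)` for every `N` simultaneously. Reading out the register `g` and
undoing `V(g)` on the output then produces the classical–quantum state
`∑_g p(g) |g⟩⟨g| ⊗ (id ⊗ N^g)(φ)`, and the same for `M`. Data processing for this composite
channel, followed by the direct-sum property, gives the inequality. -/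

def block {R A : Type} (M : Matrix (R × A) (R × A) ℂ) (r r' : R) : Matrix A A ℂ :=
  M.submatrix (Prod.mk r) (Prod.mk r')

lemma sum_kronecker {J l m n o : Type} (s : Finset J) (M : J → Matrix l m ℂ)
    (N : Matrix n o ℂ) : (∑ j ∈ s, M j) ⊗ₖ N = ∑ j ∈ s, M j ⊗ₖ N := by
  ext p q
  simp [Matrix.sum_apply, Finset.sum_mul]

section IdTensor

variable {R R' A B C : Type}

lemma idTensor_apply (Φ : Matrix A A ℂ →ₗ[ℂ] Matrix B B ℂ) (M : Matrix (R × A) (R × A) ℂ)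
    (p q : R × B) : idTensor Φ M p q = Φ (block M p.1 q.1) p.2 q.2 := rfl

lemma block_idTensor (Φ : Matrix A A ℂ →ₗ[ℂ] Matrix B B ℂ) (M : Matrix (R × A) (R × A) ℂ)
    (r r' : R) : block (idTensor Φ M) r r' = Φ (block M r r') := rfl

lemma idTensor_id (M : Matrix (R × A) (R × A) ℂ) : idTensor LinearMap.id M = M := rfl

lemma idTensor_sum {J : Type} (s : Finset J) (Φ : J → Matrix A A ℂ →ₗ[ℂ] Matrix B B ℂ)
    (M : Matrix (R × A) (R × A) ℂ) :
    idTensor (∑ j ∈ s, Φ j) M = ∑ j ∈ s, idTensor (Φ j) M := by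
  ext p q
  simp [idTensor_apply, Matrix.sum_apply, LinearMap.sum_apply]

lemma block_conjMap_kronecker_one [Fintype R] [Fintype R'] [Fintype A] [DecidableEq A]
    (K : Matrix R' R ℂ) (M : Matrix (R × A) (R × A) ℂ) (r r' : R') :
    block (conjMap (K ⊗ₖ (1 : Matrix A A ℂ)) M) r r'
      = ∑ s, ∑ s', (K r s * star (K r' s')) • block M s s' := by
  ext a a'
  simp only [conjMap, LinearMap.coe_mk, AddHom.coe_mk, block, submatrix_apply, mul_apply,
    Fintype.sum_prod_type, conjTranspose_apply, kronecker_apply, one_apply, Matrix.sum_apply,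
    Matrix.smul_apply, smul_eq_mul]
  simp [mul_ite, Finset.sum_mul, apply_ite (starRingEnd ℂ)]
  rw [Finset.sum_comm]
  refine Finset.sum_congr rfl fun _ _ => Finset.sum_congr rfl fun _ _ => ?_
  ring

lemma block_conjMap_one_kronecker [Fintype R] [DecidableEq R] [Fintype A] [Fintype B]
    (L : Matrix B A ℂ) (M : Matrix (R × A) (R × A) ℂ) (r r' : R) :
    block (conjMap ((1 : Matrix R R ℂ) ⊗ₖ L) M) r r' = conjMap L (block M r r') := by
  ext b b'
  simp [conjMap, block, mul_apply, Fintype.sum_prod_type, one_apply, ite_mul, Finset.sum_mul,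
    apply_ite (starRingEnd ℂ)]

lemma conjMap_kronecker_one_idTensor [Fintype R] [Fintype R'] [Fintype A] [DecidableEq A]
    [Fintype B] [DecidableEq B] (Φ : Matrix A A ℂ →ₗ[ℂ] Matrix B B ℂ) (K : Matrix R' R ℂ)
    (M : Matrix (R × A) (R × A) ℂ) :
    conjMap (K ⊗ₖ (1 : Matrix B B ℂ)) (idTensor Φ M)
      = idTensor Φ (conjMap (K ⊗ₖ (1 : Matrix A A ℂ)) M) := by
  ext p q
  change block (conjMap (K ⊗ₖ 1) (idTensor Φ M)) p.1 q.1 p.2 q.2 = _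
  rw [block_conjMap_kronecker_one, idTensor_apply, block_conjMap_kronecker_one]
  simp [Matrix.sum_apply, block_idTensor]

lemma conjMap_one_kronecker_idTensor [Fintype R] [DecidableEq R] [Fintype B] [Fintype C]
    (Φ : Matrix A A ℂ →ₗ[ℂ] Matrix B B ℂ) (L : Matrix C B ℂ) (M : Matrix (R × A) (R × A) ℂ) :
    conjMap ((1 : Matrix R R ℂ) ⊗ₖ L) (idTensor Φ M) = idTensor (conjMap L ∘ₗ Φ) M := by
  ext p q
  change block (conjMap (1 ⊗ₖ L) (idTensor Φ M)) p.1 q.1 p.2 q.2 = _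
  rw [block_conjMap_one_kronecker, block_idTensor]
  rfl

lemma idTensor_conjMap [Fintype R] [DecidableEq R] [Fintype A] [Fintype B] (L : Matrix B A ℂ)
    (M : Matrix (R × A) (R × A) ℂ) : idTensor (conjMap L) M = conjMap (1 ⊗ₖ L) M := by
  have h := conjMap_one_kronecker_idTensor LinearMap.id L M
  rwa [LinearMap.comp_id, idTensor_id, eq_comm] at h

lemma trace_eq_sum_trace_block [Fintype R] [Fintype A] (M : Matrix (R × A) (R × A) ℂ) :
    M.trace = ∑ r, (block M r r).trace := by
  simp [trace, Fintype.sum_prod_type, block]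

lemma trace_idTensor [Fintype R] [Fintype A] [Fintype B] {Φ : Matrix A A ℂ →ₗ[ℂ] Matrix B B ℂ}
    (hΦ : ∀ X, (Φ X).trace = X.trace) (M : Matrix (R × A) (R × A) ℂ) :
    (idTensor Φ M).trace = M.trace := by
  simp only [trace_eq_sum_trace_block, block_idTensor, hΦ]

lemma ptraceLeft_eq_sum_block [Fintype R] (M : Matrix (R × A) (R × A) ℂ) :
    ptraceLeft M = ∑ r, block M r r := by
  ext a a'
  simp [ptraceLeft, block, Matrix.sum_apply]

lemma ptraceLeft_idTensor [Fintype R] (Φ : Matrix A A ℂ →ₗ[ℂ] Matrix B B ℂ)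
    (M : Matrix (R × A) (R × A) ℂ) : ptraceLeft (idTensor Φ M) = Φ (ptraceLeft M) := by
  simp only [ptraceLeft_eq_sum_block, block_idTensor, map_sum]

end IdTensor

section VecState

variable {ι κ : Type}

lemma conjMap_vecState [Fintype ι] [Fintype κ] (K : Matrix κ ι ℂ) (v : ι → ℂ) :
    conjMap K (vecState v) = vecState (K *ᵥ v) := by
  ext i j
  simp only [conjMap, LinearMap.coe_mk, AddHom.coe_mk, vecState, mul_apply, of_apply,
    conjTranspose_apply, mulVec, dotProduct, Finset.sum_mul, Finset.mul_sum, star_sum, star_mul']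
  exact Finset.sum_congr rfl fun _ _ => Finset.sum_congr rfl fun _ _ => by ring

lemma vecState_smul (c : ℂ) (v : ι → ℂ) : vecState (c • v) = (c * star c) • vecState v := by
  ext i j
  simp only [vecState, of_apply, Pi.smul_apply, smul_eq_mul, star_mul', Matrix.smul_apply]
  ring

lemma vecState_zero : vecState (0 : ι → ℂ) = 0 := by
  ext i j
  simp [vecState]

lemma IsDensity.nonempty [Fintype ι] {ρ : Matrix ι ι ℂ} (hρ : IsDensity ρ) : Nonempty ι := by
  by_contra h
  rw [not_nonempty_iff] at h
  simpa [trace] using hρ.2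

end VecState

section Channel

variable {ι κ τ : Type} [Fintype ι] [Fintype κ]

lemma IsCPTP.posSemidef_idTensor {R : Type} [Fintype R] {Φ : Matrix ι ι ℂ →ₗ[ℂ] Matrix κ κ ℂ}
    (hΦ : IsCPTP Φ) {M : Matrix (R × ι) (R × ι) ℂ} (hM : M.PosSemidef) :
    (idTensor Φ M).PosSemidef := by
  let e := (Fintype.equivFin R).symm
  have h := hΦ.1 _ _ (hM.submatrix (e.prodCongr (Equiv.refl ι)))
  exact (posSemidef_submatrix_equiv (e.prodCongr (Equiv.refl κ))).mp h

lemma IsCPTP.isDensity_idTensor {R : Type} [Fintype R] {Φ : Matrix ι ι ℂ →ₗ[ℂ] Matrix κ κ ℂ}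
    (hΦ : IsCPTP Φ) {M : Matrix (R × ι) (R × ι) ℂ} (hM : IsDensity M) :
    IsDensity (idTensor Φ M) :=
  ⟨hΦ.posSemidef_idTensor hM.1, (trace_idTensor hΦ.2 M).trans hM.2⟩

lemma IsCPTP.comp [Fintype τ] {Φ : Matrix κ κ ℂ →ₗ[ℂ] Matrix τ τ ℂ}
    {Ψ : Matrix ι ι ℂ →ₗ[ℂ] Matrix κ κ ℂ} (hΦ : IsCPTP Φ) (hΨ : IsCPTP Ψ) : IsCPTP (Φ ∘ₗ Ψ) :=
  ⟨fun _ _ hM => hΦ.1 _ _ (hΨ.1 _ _ hM), fun X => (hΦ.2 _).trans (hΨ.2 X)⟩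

lemma conjMap_mul_apply [Fintype τ] (K : Matrix κ τ ℂ) (T : Matrix τ ι ℂ) (X : Matrix ι ι ℂ) :
    conjMap (K * T) X = conjMap K (conjMap T X) := by
  simp only [conjMap, LinearMap.coe_mk, AddHom.coe_mk, conjTranspose_mul, Matrix.mul_assoc]

lemma isCPTP_sum_conjMap [DecidableEq ι] {J : Type} [Fintype J] (K : J → Matrix κ ι ℂ)
    (hK : ∑ j, (K j)ᴴ * K j = 1) : IsCPTP (∑ j, conjMap (K j)) := by
  refine ⟨fun r M hM => ?_, fun X => ?_⟩
  · rw [idTensor_sum]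
    exact posSemidef_sum _ fun j _ => by
      rw [idTensor_conjMap]
      exact hM.mul_mul_conjTranspose_same _
  · simp only [LinearMap.sum_apply, trace_sum, conjMap, LinearMap.coe_mk, AddHom.coe_mk]
    simp_rw [trace_mul_cycle (K _), ← trace_sum, ← Finset.sum_mul, hK, Matrix.one_mul]

lemma isCPTP_conjMap [DecidableEq ι] (K : Matrix κ ι ℂ) (hK : Kᴴ * K = 1) :
    IsCPTP (conjMap K) := by
  simpa using isCPTP_sum_conjMap (fun _ : Unit => K) (by simpa using hK)

lemma IsCPTP.conjMap_comp_comp_conjMap [DecidableEq ι] [DecidableEq κ]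
    {Φ : Matrix ι ι ℂ →ₗ[ℂ] Matrix κ κ ℂ} (hΦ : IsCPTP Φ) (U : unitaryGroup ι ℂ)
    (V : unitaryGroup κ ℂ) :
    IsCPTP (conjMap (V : Matrix κ κ ℂ)ᴴ ∘ₗ Φ ∘ₗ conjMap (U : Matrix ι ι ℂ)) :=
  (isCPTP_conjMap _ (by rw [conjTranspose_conjTranspose]; exact V.2.2)).comp
    (hΦ.comp (isCPTP_conjMap _ U.2.1))

theorem exists_isCPTP_eq_conjMap [Fintype τ] [DecidableEq ι] [DecidableEq κ] [DecidableEq τ]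
    [Nonempty κ] (K : Matrix κ ι ℂ) (T : Matrix τ ι ℂ) (h : Kᴴ * K + Tᴴ * T = 1) :
    ∃ Λ : Matrix ι ι ℂ →ₗ[ℂ] Matrix κ κ ℂ, IsCPTP Λ ∧
      ∀ X, conjMap T X = 0 → Λ X = conjMap K X := by
  -- the defect `Tᴴ T` is taken up by the Kraus operators `|k₀⟩⟨t| T`
  let k₀ := Classical.arbitrary κ
  let E : Option τ → Matrix κ ι ℂ := fun o => o.elim K fun t => single k₀ t (1 : ℂ) * T
  have hE : ∑ o, (E o)ᴴ * E o = 1 := by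
    have ht (t : τ) : (E (some t))ᴴ * E (some t) = Tᴴ * (single t t 1 : Matrix τ τ ℂ) * T := by
      simp only [E, Option.elim]
      rw [conjTranspose_mul, conjTranspose_single, star_one, Matrix.mul_assoc,
        ← Matrix.mul_assoc (single t k₀ 1), single_mul_single_same, mul_one, Matrix.mul_assoc]
    rw [Fintype.sum_option]
    simp only [ht]
    rwa [← Matrix.sum_mul, ← Matrix.mul_sum, sum_single_one, Matrix.mul_one]
  refine ⟨∑ o, conjMap (E o), isCPTP_sum_conjMap E hE, fun X hX => ?_⟩
  simp [E, Fintype.sum_option, conjMap_mul_apply, hX]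

end Channel

section Uhlmann

variable {R S A : Type} [Fintype R] [Fintype S] [Fintype A] [DecidableEq A]

lemma cfc_mul_cfc_mul_cfc (Q : Matrix A A ℂ) (hQ : Q.IsHermitian) (f g h : ℝ → ℝ) :
    cfc f Q * cfc g Q * cfc h Q = cfc (fun x => f x * g x * h x) Q := by
  have hc (f : ℝ → ℝ) : ContinuousOn f (spectrum ℝ Q) := Q.finite_real_spectrum.continuousOn f
  have : IsSelfAdjoint Q := hQ
  rw [cfc_mul _ _ Q (hc _) (hc _), cfc_mul _ _ Q (hc _) (hc _)]

lemma mul_cfc_inv_mul_self (Q : Matrix A A ℂ) (hQ : Q.IsHermitian) :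
    Q * cfc (·⁻¹ : ℝ → ℝ) Q * Q = Q := by
  have : IsSelfAdjoint Q := hQ
  have h := cfc_mul_cfc_mul_cfc Q hQ (fun x => x) (·⁻¹) (fun x => x)
  simpa only [cfc_id' ℝ Q, mul_inv_mul_cancel] using h

lemma cfc_inv_mul_self_mul_cfc_inv (Q : Matrix A A ℂ) (hQ : Q.IsHermitian) :
    cfc (·⁻¹ : ℝ → ℝ) Q * Q * cfc (·⁻¹ : ℝ → ℝ) Q = cfc (·⁻¹ : ℝ → ℝ) Q := by
  have : IsSelfAdjoint Q := hQ
  have hx (x : ℝ) : x⁻¹ * x * x⁻¹ = x⁻¹ := by simpa using mul_inv_mul_cancel x⁻¹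
  have h := cfc_mul_cfc_mul_cfc Q hQ (·⁻¹) (fun x => x) (·⁻¹)
  simpa only [cfc_id' ℝ Q, hx] using h

lemma mul_cfc_inv_mul_conjTranspose_mul_self (F : Matrix S A ℂ) :
    F * cfc (·⁻¹ : ℝ → ℝ) (Fᴴ * F) * (Fᴴ * F) = F := by
  set Q := Fᴴ * F
  set P := cfc (·⁻¹ : ℝ → ℝ) Q
  have hQ : Q.IsHermitian := isHermitian_conjTranspose_mul_self F
  have hP : Pᴴ = P := (cfc_predicate _ Q : IsSelfAdjoint P)
  have h : (F * (P * Q - 1))ᴴ * (F * (P * Q - 1)) = 0 := by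
    rw [conjTranspose_mul, conjTranspose_sub, conjTranspose_mul, hP, hQ.eq, conjTranspose_one,
      Matrix.mul_assoc, ← Matrix.mul_assoc Fᴴ, ← Matrix.mul_assoc, sub_mul, Matrix.one_mul,
      mul_cfc_inv_mul_self Q hQ, sub_self, Matrix.zero_mul]
  rw [conjTranspose_mul_self_eq_zero, Matrix.mul_sub, Matrix.mul_one, sub_eq_zero] at h
  rw [Matrix.mul_assoc, h]

theorem exists_contraction_mul_eq_of_conjTranspose_mul_self_eq [DecidableEq R]
    (F : Matrix R A ℂ) (F' : Matrix S A ℂ) (h : Fᴴ * F = F'ᴴ * F') :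
    ∃ (W : Matrix S R ℂ) (T : Matrix R R ℂ), W * F = F' ∧ T * F = 0 ∧ Wᴴ * W + Tᴴ * T = 1 := by
  -- `P` is the Moore–Penrose inverse of `Fᴴ F` (thanks to `0⁻¹ = 0`), and `Pr = F P Fᴴ` is
  -- the orthogonal projection onto the range of `F`
  have hQ : (Fᴴ * F).IsHermitian := isHermitian_conjTranspose_mul_self F
  set P := cfc (·⁻¹ : ℝ → ℝ) (Fᴴ * F)
  have hP : Pᴴ = P := (cfc_predicate _ _ : IsSelfAdjoint P)
  have hF : F * P * (Fᴴ * F) = F := mul_cfc_inv_mul_conjTranspose_mul_self F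
  have hF' : F' * P * (Fᴴ * F) = F' := by
    simp only [P, h]
    exact mul_cfc_inv_mul_conjTranspose_mul_self F'
  have hPQP : P * (Fᴴ * F) * P = P := cfc_inv_mul_self_mul_cfc_inv _ hQ
  set Pr := F * P * Fᴴ with hPr
  have hPrH : Prᴴ = Pr := by
    rw [hPr, conjTranspose_mul, conjTranspose_mul, hP, conjTranspose_conjTranspose,
      Matrix.mul_assoc]
  have hPrPr : Pr * Pr = Pr := by
    rw [hPr, show F * P * Fᴴ * (F * P * Fᴴ) = F * (P * (Fᴴ * F) * P) * Fᴴ by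
      simp only [Matrix.mul_assoc], hPQP, Matrix.mul_assoc]
  have hW : (F' * P * Fᴴ)ᴴ * (F' * P * Fᴴ) = Pr := by
    rw [conjTranspose_mul, conjTranspose_mul, hP, conjTranspose_conjTranspose,
      show F * (P * F'ᴴ) * (F' * P * Fᴴ) = F * (P * (F'ᴴ * F') * P) * Fᴴ by
        simp only [Matrix.mul_assoc], ← h, hPQP]
  refine ⟨F' * P * Fᴴ, 1 - Pr, ?_, ?_, ?_⟩
  · rw [Matrix.mul_assoc, hF']
  · rw [Matrix.sub_mul, Matrix.one_mul, hPr, Matrix.mul_assoc, hF, sub_self]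
  · rw [hW, conjTranspose_sub, conjTranspose_one, hPrH, sub_mul, Matrix.one_mul, mul_sub,
      Matrix.mul_one, hPrPr]
    abel

end Uhlmann

section Purification

variable {R S A B : Type} [Fintype R]

lemma conjTranspose_mul_self_curry (v : R × A → ℂ) :
    (of (Function.curry v))ᴴ * of (Function.curry v) = (ptraceLeft (vecState v))ᵀ := by
  ext a a'
  simp [mul_apply, ptraceLeft, vecState, mul_comm]

lemma kronecker_one_mulVec [Fintype A] [DecidableEq A] (K : Matrix S R ℂ) (v : R × A → ℂ) :
    (K ⊗ₖ (1 : Matrix A A ℂ)) *ᵥ v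
      = Function.uncurry (K * of (Function.curry v) : Matrix S A ℂ) := by
  ext ⟨s, a⟩
  simp [mulVec, dotProduct, Fintype.sum_prod_type, one_apply]
  rfl

theorem exists_contraction_kronecker_mulVec_eq [DecidableEq R] [Fintype S] [Fintype A]
    [DecidableEq A] (v : R × A → ℂ) (v' : S × A → ℂ)
    (h : ptraceLeft (vecState v) = ptraceLeft (vecState v')) :
    ∃ (W : Matrix S R ℂ) (T : Matrix R R ℂ), (W ⊗ₖ (1 : Matrix A A ℂ)) *ᵥ v = v' ∧
      (T ⊗ₖ (1 : Matrix A A ℂ)) *ᵥ v = 0 ∧ Wᴴ * W + Tᴴ * T = 1 := by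
  obtain ⟨W, T, hW, hT, hWT⟩ := exists_contraction_mul_eq_of_conjTranspose_mul_self_eq
    (of (Function.curry v)) (of (Function.curry v'))
    (by rw [conjTranspose_mul_self_curry, conjTranspose_mul_self_curry, h])
  refine ⟨W, T, ?_, ?_, hWT⟩
  · rw [kronecker_one_mulVec, hW]
    rfl
  · rw [kronecker_one_mulVec, hT]
    rfl

theorem exists_isCPTP_idTensor_vecState_eq [DecidableEq R] [Fintype S] [DecidableEq S]
    [Nonempty S] [Fintype A] [DecidableEq A] [Fintype B] [DecidableEq B] [Nonempty B]
    (v : R × A → ℂ) (v' : S × A → ℂ) (h : ptraceLeft (vecState v) = ptraceLeft (vecState v')) :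
    ∃ Λ : Matrix (R × B) (R × B) ℂ →ₗ[ℂ] Matrix (S × B) (S × B) ℂ, IsCPTP Λ ∧
      ∀ Φ : Matrix A A ℂ →ₗ[ℂ] Matrix B B ℂ,
        Λ (idTensor Φ (vecState v)) = idTensor Φ (vecState v') := by
  obtain ⟨W, T, hW, hT, hWT⟩ := exists_contraction_kronecker_mulVec_eq v v' h
  obtain ⟨Λ, hΛ, hΛW⟩ := exists_isCPTP_eq_conjMap (W ⊗ₖ (1 : Matrix B B ℂ))
    (T ⊗ₖ (1 : Matrix B B ℂ)) (by
      simp only [conjTranspose_kronecker, conjTranspose_one, ← mul_kronecker_mul,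
        Matrix.mul_one, ← add_kronecker, hWT, one_kronecker_one])
  refine ⟨Λ, hΛ, fun Φ => ?_⟩
  rw [hΛW, conjMap_kronecker_one_idTensor, conjMap_vecState, hW]
  rw [conjMap_kronecker_one_idTensor, conjMap_vecState, hT, vecState_zero, map_zero]

end Purification

section Readout

variable {X ι : Type} [Fintype X] [DecidableEq X] [Fintype ι] [DecidableEq ι]

/-- The isometry `|x⟩ ⊗ 1 : ι → X × ι`. -/
def blockIncl (ι : Type) [DecidableEq ι] (x : X) : Matrix (X × ι) ι ℂ :=
  of fun p i => if p = (x, i) then 1 else 0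

lemma conjTranspose_blockIncl_mul_blockIncl (x : X) : (blockIncl ι x)ᴴ * blockIncl ι x = 1 := by
  ext i j
  simp [blockIncl, mul_apply, one_apply, eq_comm]

lemma sum_blockIncl_mul_conjTranspose : ∑ x : X, blockIncl ι x * (blockIncl ι x)ᴴ = 1 := by
  ext ⟨x, i⟩ ⟨x', i'⟩
  simp [blockIncl, mul_apply, one_apply, Matrix.sum_apply, ite_and, apply_ite (starRingEnd ℂ)]

lemma cqState_eq_sum_conjMap_blockIncl (p : X → ℝ) (ρ : X → Matrix ι ι ℂ) :
    cqState p ρ = ∑ x, (p x : ℂ) • conjMap (blockIncl ι x) (ρ x) := by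
  ext ⟨x, i⟩ ⟨x', i'⟩
  simp only [cqState, conjMap, blockIncl, LinearMap.coe_mk, AddHom.coe_mk, of_apply,
    Matrix.sum_apply, Matrix.smul_apply, mul_apply, conjTranspose_apply, smul_eq_mul]
  by_cases h : x = x' <;> simp [h, ite_and, apply_ite (starRingEnd ℂ)]

end Readout

section Ensemble

variable {X R A B : Type} [Fintype X] [Fintype R]

lemma ofReal_sqrt_mul_star {a : ℝ} (ha : 0 ≤ a) : (√a : ℂ) * star (√a : ℂ) = a := by
  rw [Complex.star_def, Complex.conj_ofReal, ← Complex.ofReal_mul, Real.mul_self_sqrt ha]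

noncomputable def ensemblePurification (p : X → ℝ) (w : X → R × A → ℂ) : (X × R) × A → ℂ :=
  fun q => (√(p q.1.1) : ℂ) * w q.1.1 (q.1.2, q.2)

lemma ptraceLeft_vecState_ensemblePurification {p : X → ℝ} (hp : ∀ x, 0 ≤ p x)
    (w : X → R × A → ℂ) :
    ptraceLeft (vecState (ensemblePurification p w))
      = ∑ x, (p x : ℂ) • ptraceLeft (vecState (w x)) := by
  ext a a'
  simp only [ptraceLeft, vecState, ensemblePurification, of_apply, Fintype.sum_prod_type,
    Matrix.sum_apply, Matrix.smul_apply, smul_eq_mul, Finset.mul_sum, star_mul']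
  refine Finset.sum_congr rfl fun x _ => Finset.sum_congr rfl fun r _ => ?_
  rw [← ofReal_sqrt_mul_star (hp x)]
  ring

variable [DecidableEq X] [DecidableEq R]

lemma conjTranspose_blockIncl_kronecker_mulVec [Fintype A] [DecidableEq A] (p : X → ℝ)
    (w : X → R × A → ℂ) (x : X) :
    ((blockIncl R x)ᴴ ⊗ₖ (1 : Matrix A A ℂ)) *ᵥ ensemblePurification p w
      = (√(p x) : ℂ) • w x := by
  rw [kronecker_one_mulVec]
  ext ⟨r, a⟩
  change ((blockIncl R x)ᴴ * of (Function.curry (ensemblePurification p w))) r a = _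
  simp [blockIncl, mul_apply, ensemblePurification]

variable [Fintype B] [DecidableEq B]

/-- Measure the register `X` of `(X × R) × B`, keeping the outcome `x` as a classical register,
and conjugate the `B` part by `L x`. -/
def measureConjMap (L : X → Matrix B B ℂ) :
    Matrix ((X × R) × B) ((X × R) × B) ℂ →ₗ[ℂ] Matrix (X × (R × B)) (X × (R × B)) ℂ :=
  ∑ x, conjMap (blockIncl (R × B) x * ((blockIncl R x)ᴴ ⊗ₖ L x))

lemma isCPTP_measureConjMap (L : X → Matrix B B ℂ) (hL : ∀ x, (L x)ᴴ * L x = 1) :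
    IsCPTP (measureConjMap (R := R) L) := by
  refine isCPTP_sum_conjMap _ ?_
  have h (x : X) : (blockIncl (R × B) x * ((blockIncl R x)ᴴ ⊗ₖ L x))ᴴ
      * (blockIncl (R × B) x * ((blockIncl R x)ᴴ ⊗ₖ L x))
      = (blockIncl R x * (blockIncl R x)ᴴ) ⊗ₖ (1 : Matrix B B ℂ) := by
    rw [conjTranspose_mul, Matrix.mul_assoc, ← Matrix.mul_assoc (blockIncl (R × B) x)ᴴ,
      conjTranspose_blockIncl_mul_blockIncl, Matrix.one_mul, conjTranspose_kronecker,
      conjTranspose_conjTranspose, ← mul_kronecker_mul, hL]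
  simp only [h]
  rw [← sum_kronecker, sum_blockIncl_mul_conjTranspose, one_kronecker_one]

lemma measureConjMap_idTensor_vecState_ensemblePurification [Fintype A] [DecidableEq A]
    {p : X → ℝ} (hp : ∀ x, 0 ≤ p x) (L : X → Matrix B B ℂ)
    (Φ : Matrix A A ℂ →ₗ[ℂ] Matrix B B ℂ) (w : X → R × A → ℂ) :
    measureConjMap L (idTensor Φ (vecState (ensemblePurification p w)))
      = cqState p (fun x => idTensor (conjMap (L x) ∘ₗ Φ) (vecState (w x))) := by
  rw [cqState_eq_sum_conjMap_blockIncl, measureConjMap, LinearMap.sum_apply]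
  refine Finset.sum_congr rfl fun x _ => ?_
  have hE : (blockIncl R x)ᴴ ⊗ₖ L x
      = ((1 : Matrix R R ℂ) ⊗ₖ L x) * ((blockIncl R x)ᴴ ⊗ₖ (1 : Matrix B B ℂ)) := by
    rw [← mul_kronecker_mul, Matrix.one_mul, Matrix.mul_one]
  rw [hE, conjMap_mul_apply, conjMap_mul_apply, conjMap_kronecker_one_idTensor, conjMap_vecState,
    conjTranspose_blockIncl_kronecker_mulVec, vecState_smul, ofReal_sqrt_mul_star (hp x),
    map_smul, map_smul, conjMap_one_kronecker_idTensor, map_smul]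

end Ensemble

theorem twirled_purification_divergence_bound_general
    {G A B RA RB : Type} [Group G] [Fintype G]
    [Fintype A] [DecidableEq A] [Fintype B] [DecidableEq B]
    [Fintype RA] [DecidableEq RA] [Fintype RB] [DecidableEq RB]
    (U : G →* Matrix.unitaryGroup A ℂ) (V : G →* Matrix.unitaryGroup B ℂ)
    (N M : Matrix A A ℂ →ₗ[ℂ] Matrix B B ℂ) (hN : IsCPTP N) (hM : IsCPTP M)
    (pG : G → ℝ) (hpG : ∀ g, 0 ≤ pG g) (hpGsum : ∑ g, pG g = 1)
    (ρ : Matrix A A ℂ)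
    (φ : Matrix (RA × A) (RA × A) ℂ) (hφ : IsPurification φ ρ)
    (φbar : Matrix (RB × A) (RB × A) ℂ)
    (hφbar : IsPurification φbar
      (∑ g, (pG g : ℂ) • ((U g : Matrix A A ℂ) * ρ * (U g : Matrix A A ℂ)ᴴ)))
    (𝒟 : GenDivergence) (hDS : HasDirectSum 𝒟) :
    ∑ g, pG g *
        𝒟.D (idTensor (conjMap ((V g : Matrix B B ℂ)ᴴ) ∘ₗ N ∘ₗ conjMap (U g : Matrix A A ℂ)) φ)
             (idTensor (conjMap ((V g : Matrix B B ℂ)ᴴ) ∘ₗ M ∘ₗ conjMap (U g : Matrix A A ℂ)) φ)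
      ≤ 𝒟.D (idTensor N φbar) (idTensor M φbar) := by
  classical
  obtain ⟨⟨v, rfl⟩, hφ, hφρ⟩ := hφ
  obtain ⟨⟨vb, rfl⟩, hφbar, hφbarρ⟩ := hφbar
  have hNφbar := hN.isDensity_idTensor hφbar
  have : Nonempty RA := hφ.nonempty.map Prod.fst
  have : Nonempty B := hNφbar.nonempty.map Prod.snd
  let w (g : G) : RA × A → ℂ := (1 ⊗ₖ (U g : Matrix A A ℂ)) *ᵥ v
  have hw (g : G) : vecState (w g) = idTensor (conjMap (U g : Matrix A A ℂ)) (vecState v) := by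
    rw [idTensor_conjMap, conjMap_vecState]
  obtain ⟨Λ, hΛ, hΛφbar⟩ := exists_isCPTP_idTensor_vecState_eq (B := B) vb
    (ensemblePurification pG w) (by
      simp only [hφbarρ, ptraceLeft_vecState_ensemblePurification hpG, hw, ptraceLeft_idTensor,
        hφρ]
      rfl)
  let Γ := measureConjMap (fun g => (V g : Matrix B B ℂ)ᴴ) ∘ₗ Λ
  have hΓ : IsCPTP Γ := (isCPTP_measureConjMap _ fun g => by
    rw [conjTranspose_conjTranspose]; exact (V g).2.2).comp hΛ
  have hΓφbar (Φ : Matrix A A ℂ →ₗ[ℂ] Matrix B B ℂ) : Γ (idTensor Φ (vecState vb))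
      = cqState pG fun g => idTensor (conjMap ((V g : Matrix B B ℂ)ᴴ) ∘ₗ Φ
          ∘ₗ conjMap (U g : Matrix A A ℂ)) (vecState v) := by
    simp only [Γ, LinearMap.comp_apply, hΛφbar,
      measureConjMap_idTensor_vecState_ensemblePurification hpG, hw]
    rfl
  calc _ = 𝒟.D (Γ (idTensor N (vecState vb))) (Γ (idTensor M (vecState vb))) := by
        rw [hΓφbar, hΓφbar, hDS pG hpG hpGsum _ _
          (fun g => (hN.conjMap_comp_comp_conjMap (U g) (V g)).isDensity_idTensor hφ)
          (fun g => (hM.conjMap_comp_comp_conjMap (U g) (V g)).isDensity_idTensor hφ)]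
    _ ≤ _ := 𝒟.data_proc Γ hΓ _ _ hNφbar (hM.posSemidef_idTensor hφbar.1)

/-- For channels N, M, unitary representations U, V of a finite group G,
a probability distribution p_G, a purification φ of ρ and a purification φ̄ of the group
average ρ̄ = ∑_g p_G(g) U(g) ρ U(g)†, and a generalized divergence D with the direct-sum
property, one has D(N(φ̄)‖M(φ̄)) ≥ ∑_g p_G(g) D(N^g(φ)‖M^g(φ)). -/
theorem twirled_purification_divergence_bound
    {G A B RA RB : Type} [Group G] [Fintype G]
    [Fintype A] [DecidableEq A] [Fintype B] [DecidableEq B]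
    [Fintype RA] [DecidableEq RA] [Fintype RB] [DecidableEq RB]
    (U : G →* Matrix.unitaryGroup A ℂ) (V : G →* Matrix.unitaryGroup B ℂ)
    (N M : Matrix A A ℂ →ₗ[ℂ] Matrix B B ℂ) (hN : IsCPTP N) (hM : IsCPTP M)
    (pG : G → ℝ) (hpG : ∀ g, 0 ≤ pG g) (hpGsum : ∑ g, pG g = 1)
    (ρ : Matrix A A ℂ) (hρ : IsDensity ρ)
    (φ : Matrix (RA × A) (RA × A) ℂ) (hφ : IsPurification φ ρ)
    (φbar : Matrix (RB × A) (RB × A) ℂ)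
    (hφbar : IsPurification φbar
      (∑ g, (pG g : ℂ) • ((U g : Matrix A A ℂ) * ρ * (U g : Matrix A A ℂ)ᴴ)))
    (𝒟 : GenDivergence) (hDS : HasDirectSum 𝒟) :
    ∑ g, pG g *
        𝒟.D (idTensor (conjMap ((V g : Matrix B B ℂ)ᴴ) ∘ₗ N ∘ₗ conjMap (U g : Matrix A A ℂ)) φ)
             (idTensor (conjMap ((V g : Matrix B B ℂ)ᴴ) ∘ₗ M ∘ₗ conjMap (U g : Matrix A A ℂ)) φ)
      ≤ 𝒟.D (idTensor N φbar) (idTensor M φbar) :=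
  twirled_purification_divergence_bound_general U V N M hN hM pG hpG hpGsum ρ φ hφ φbar hφbar 𝒟 hDS
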